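/- Fix real parameters ξ and ν, and let u : [0,∞) → ℝ be smooth satisfying the ODE −u''(t) + ((ξ−t)² + 1)u(t) = ν u(t) for all t ≥ 0. Then for every real polynomial p, the function w := 2pu' − p'u satisfies the pointwise identity −w''(t) + ((ξ−t)² + 1 − ν)w(t) = ( p'''(t) − 4((ξ−t)² + 1 − ν)p'(t) + 4(ξ−t)p(t) ) u(t) for all t ≥ 0. -/

import Mathlib

/-!
Write `V(s) = (ξ - s)² + 1 - ν`, so that `u'' = V u` on `[0, ∞)`. Differentiating `w` twice
gives `w'' = 3 p' u'' + 2 p u''' - p''' u`. Differentiating the ODE gives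
`u''' = V' u + V u'` on `[0, ∞)`, including at the endpoint `0`, since one-sided derivatives
along `[0, ∞)` are unique. Substituting both, the `u'` terms cancel against `V w`.
-/

open Polynomial Set

noncomputable def polyCommutator (p : ℝ[X]) (u : ℝ → ℝ) : ℝ → ℝ :=
  fun s => 2 * p.eval s * deriv u s - (derivative p).eval s * u s

section
variable {u : ℝ → ℝ}

theorem hasDerivAt_polyCommutator (p : ℝ[X]) (hu : Differentiable ℝ u)
    (hu' : Differentiable ℝ (deriv u)) (t : ℝ) :
    HasDerivAt (polyCommutator p u)
      ((derivative p).eval t * deriv u t + 2 * p.eval t * deriv (deriv u) t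
        - (derivative (derivative p)).eval t * u t) t :=
  ((((p.hasDerivAt t).const_mul 2).mul (hu' t).hasDerivAt).sub
    (((derivative p).hasDerivAt t).mul (hu t).hasDerivAt)).congr_deriv (by ring)

theorem deriv_deriv_polyCommutator (p : ℝ[X]) (hu : Differentiable ℝ u)
    (hu' : Differentiable ℝ (deriv u)) (hu'' : Differentiable ℝ (deriv (deriv u))) (t : ℝ) :
    deriv (deriv (polyCommutator p u)) t =
      3 * (derivative p).eval t * deriv (deriv u) t + 2 * p.eval t * deriv (deriv (deriv u)) t
        - (derivative (derivative (derivative p))).eval t * u t := by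
  have hw' : deriv (polyCommutator p u) = fun s =>
      (derivative p).eval s * deriv u s + 2 * p.eval s * deriv (deriv u) s
        - (derivative (derivative p)).eval s * u s :=
    funext fun s => (hasDerivAt_polyCommutator p hu hu' s).deriv
  rw [hw']
  refine (((((derivative p).hasDerivAt t).mul (hu' t).hasDerivAt).add
    (((p.hasDerivAt t).const_mul 2).mul (hu'' t).hasDerivAt)).sub
    (((derivative (derivative p)).hasDerivAt t).mul (hu t).hasDerivAt)).deriv.trans ?_
  ring

theorem deriv_deriv_deriv_of_eqOn {V : ℝ → ℝ} {V' t : ℝ} {s : Set ℝ}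
    (hode : EqOn (deriv (deriv u)) (fun x => V x * u x) s) (hs : UniqueDiffWithinAt ℝ s t)
    (ht : t ∈ s) (hV : HasDerivAt V V' t) (hu : DifferentiableAt ℝ u t)
    (hu'' : DifferentiableAt ℝ (deriv (deriv u)) t) :
    deriv (deriv (deriv u)) t = V' * u t + V t * deriv u t :=
  hs.eq_deriv s (hu''.hasDerivAt.hasDerivWithinAt.congr hode.symm (hode ht).symm)
    (hV.mul hu.hasDerivAt).hasDerivWithinAt

end

theorem polynomial_commutator_identity
    (ξ ν : ℝ) (u : ℝ → ℝ) (hu : ContDiff ℝ (⊤ : ℕ∞) u)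
    (hode : ∀ t : ℝ, 0 ≤ t → -(deriv (deriv u) t) + ((ξ - t) ^ 2 + 1) * u t = ν * u t)
    (p : Polynomial ℝ) :
    ∀ t : ℝ, 0 ≤ t →
      -(deriv (deriv (fun s : ℝ =>
            2 * p.eval s * deriv u s - (Polynomial.derivative p).eval s * u s)) t)
          + ((ξ - t) ^ 2 + 1 - ν) *
              (2 * p.eval t * deriv u t - (Polynomial.derivative p).eval t * u t)
        = ((Polynomial.derivative (Polynomial.derivative (Polynomial.derivative p))).eval t
            - 4 * ((ξ - t) ^ 2 + 1 - ν) * (Polynomial.derivative p).eval t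
            + 4 * (ξ - t) * p.eval t) * u t := by
  intro t ht
  have hu' := (contDiff_infty_iff_deriv.mp hu).2
  have hu'' := (contDiff_infty_iff_deriv.mp hu').2
  have hdiff : ∀ {f : ℝ → ℝ}, ContDiff ℝ (⊤ : ℕ∞) f → Differentiable ℝ f :=
    fun hf => hf.differentiable (by simp)
  have hode' : EqOn (deriv (deriv u)) (fun s => ((ξ - s) ^ 2 + 1 - ν) * u s) (Ici 0) :=
    fun s hs => by linear_combination -hode s hs
  have hV : HasDerivAt (fun s => (ξ - s) ^ 2 + 1 - ν) (-2 * (ξ - t)) t := by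
    simpa using ((((hasDerivAt_id t).const_sub ξ).pow 2).add_const 1).sub_const ν
  have hu''' := deriv_deriv_deriv_of_eqOn hode' (uniqueDiffOn_Ici 0 t ht) ht hV
    (hdiff hu t) (hdiff hu'' t)
  change -deriv (deriv (polyCommutator p u)) t + _ = _
  rw [deriv_deriv_polyCommutator p (hdiff hu) (hdiff hu') (hdiff hu''), hu''', hode' ht]
  ring
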